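/- Let {P₀,...,P_m} be a symmetric Clifford system on ℝ^{2l}, m > 2, x ∈ M₊, and α, β ∈ {1,...,m} with α ≠ β. Decompose P_α P_β x = U + V + W with U ∈ T₀(P₀x), V ∈ T₁(P₀x), W ∈ T₋₁(P₀x). Then 2 = |U|² + |P₀U|² + 4|W|² and 2 = |U|² + |P₀U|² + 4|V|²; in particular |V| = |W|. -/

import Mathlib

/-!
Put `y = P_α P_β x`. The `P_i` are symmetric involutions, so `|y| = |x| = 1`, and each `P_a`
maps the cone `{v : ⟨P_b v, v⟩ = 0}` into itself, so `⟨P₀ y, y⟩ = 0`. On `M₊` the trilinear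
expression `⟨P_a P_b x, P_c x⟩` is antisymmetric in `(a, b)` and symmetric in `(b, c)`, hence
vanishes; this makes `U` orthogonal to `V`, `W` and `P₀ U`. Expanding `|y|² = 1` and
`⟨P₀ y, y⟩ = 0` with `P₀ V = -V`, `P₀ W = W` then gives `|U|² + |V|² + |W|² = 1` and
`|V| = |W|`, while `|P₀ U| = |U|`.
-/

open Matrix Submodule Set

variable {n ι : Type*} [Fintype n]

theorem Matrix.IsSymm.mulVec_dotProduct {R : Type*} [CommSemiring R] {A : Matrix n n R}
    (hA : A.IsSymm) (u v : n → R) : (A *ᵥ u) ⬝ᵥ v = u ⬝ᵥ (A *ᵥ v) := by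
  rw [dotProduct_mulVec, ← mulVec_transpose, hA.eq]

theorem dotProduct_eq_zero_of_mem_span [Fintype ι] {f : ι → n → ℝ} {v u : n → ℝ}
    (hv : ∀ i, v ⬝ᵥ f i = 0) (hu : u ∈ span ℝ (range f)) : v ⬝ᵥ u = 0 := by
  obtain ⟨c, rfl⟩ := (mem_span_range_iff_exists_fun ℝ).mp hu
  simp [dotProduct_sum, hv]

theorem Matrix.IsSymm.mulVec_dotProduct_eq_zero_of_mem_span [Fintype ι] {A : Matrix n n ℝ}
    (hA : A.IsSymm) {f : ι → n → ℝ} (hf : ∀ i j, (A *ᵥ f i) ⬝ᵥ f j = 0) {u u' : n → ℝ}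
    (hu : u ∈ span ℝ (range f)) (hu' : u' ∈ span ℝ (range f)) : (A *ᵥ u) ⬝ᵥ u' = 0 :=
  dotProduct_eq_zero_of_mem_span (fun j => by
    rw [hA.mulVec_dotProduct, dotProduct_comm]
    exact dotProduct_eq_zero_of_mem_span (hf j) hu) hu'

theorem mulVec_mem_span_range [Fintype ι] {P : ι → Matrix n n ℝ} {Q : Matrix n n ℝ}
    (hQ : Q ∈ span ℝ (range P)) (v : n → ℝ) : Q *ᵥ v ∈ span ℝ (range fun i => P i *ᵥ v) := by
  obtain ⟨c, rfl⟩ := (mem_span_range_iff_exists_fun ℝ).mp hQ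
  exact (mem_span_range_iff_exists_fun ℝ).mpr ⟨c, by simp [sum_mulVec, smul_mulVec]⟩

theorem Matrix.IsSymm.two_eq_of_isotropic_decomposition [DecidableEq n] {A : Matrix n n ℝ}
    (hA : A.IsSymm) (hA2 : A * A = 1) {U V W : n → ℝ} (hV : A *ᵥ V = -V) (hW : A *ᵥ W = W)
    (hUV : U ⬝ᵥ V = 0) (hUW : U ⬝ᵥ W = 0) (hAU : (A *ᵥ U) ⬝ᵥ U = 0)
    (hy : (U + V + W) ⬝ᵥ (U + V + W) = 1) (hAy : (A *ᵥ (U + V + W)) ⬝ᵥ (U + V + W) = 0) :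
    2 = U ⬝ᵥ U + (A *ᵥ U) ⬝ᵥ (A *ᵥ U) + 4 * (W ⬝ᵥ W) ∧
    2 = U ⬝ᵥ U + (A *ᵥ U) ⬝ᵥ (A *ᵥ U) + 4 * (V ⬝ᵥ V) ∧
    V ⬝ᵥ V = W ⬝ᵥ W := by
  have hVW : V ⬝ᵥ W = 0 := by
    have h := hA.mulVec_dotProduct V W
    rw [hV, hW, neg_dotProduct] at h
    linarith
  have hAUV : (A *ᵥ U) ⬝ᵥ V = 0 := by
    rw [hA.mulVec_dotProduct, hV, dotProduct_neg, hUV, neg_zero]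
  have hAUW : (A *ᵥ U) ⬝ᵥ W = 0 := by rw [hA.mulVec_dotProduct, hW, hUW]
  have hAUAU : (A *ᵥ U) ⬝ᵥ (A *ᵥ U) = U ⬝ᵥ U := by
    rw [hA.mulVec_dotProduct, mulVec_mulVec, hA2, one_mulVec]
  simp only [mulVec_add, hV, hW, add_dotProduct, dotProduct_add, neg_dotProduct,
    dotProduct_comm V U, dotProduct_comm W U, dotProduct_comm W V, hUV, hUW, hVW, hAU, hAUV,
    hAUW] at hy hAy
  refine ⟨?_, ?_, ?_⟩ <;> linarith

structure IsSymmCliffordSystem [DecidableEq n] [DecidableEq ι] (P : ι → Matrix n n ℝ) :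
    Prop where
  isSymm : ∀ i, (P i).IsSymm
  anticomm : ∀ i j, P i * P j + P j * P i = if i = j then (2 : ℝ) • (1 : Matrix n n ℝ) else 0

namespace IsSymmCliffordSystem

variable [DecidableEq n] [DecidableEq ι] {P : ι → Matrix n n ℝ} (hP : IsSymmCliffordSystem P)
include hP

theorem mul_self (i : ι) : P i * P i = 1 := by
  have h := hP.anticomm i i
  rw [if_pos rfl, ← two_smul ℝ] at h
  exact smul_right_injective _ two_ne_zero h

theorem mulVec_dotProduct (i : ι) (u v : n → ℝ) : (P i *ᵥ u) ⬝ᵥ v = u ⬝ᵥ (P i *ᵥ v) :=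
  (hP.isSymm i).mulVec_dotProduct u v

theorem mulVec_mulVec_self (i : ι) (v : n → ℝ) : P i *ᵥ (P i *ᵥ v) = v := by
  rw [mulVec_mulVec, hP.mul_self, one_mulVec]

theorem mulVec_dotProduct_mulVec (i : ι) (u v : n → ℝ) :
    (P i *ᵥ u) ⬝ᵥ (P i *ᵥ v) = u ⬝ᵥ v := by
  rw [hP.mulVec_dotProduct, hP.mulVec_mulVec_self]

theorem mulVec_mulVec_add_mulVec_mulVec (i j : ι) (v : n → ℝ) :
    P i *ᵥ (P j *ᵥ v) + P j *ᵥ (P i *ᵥ v) = if i = j then (2 : ℝ) • v else 0 := by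
  rw [mulVec_mulVec, mulVec_mulVec, ← add_mulVec, hP.anticomm]
  split_ifs <;> simp [smul_mulVec]

theorem mulVec_mulVec_dotProduct_comm (a b c : ι) (x : n → ℝ) :
    (P a *ᵥ (P b *ᵥ x)) ⬝ᵥ (P c *ᵥ x) = (P a *ᵥ (P c *ᵥ x)) ⬝ᵥ (P b *ᵥ x) := by
  rw [hP.mulVec_dotProduct, dotProduct_comm]

theorem mulVec_mulVec_dotProduct_anticomm {x : n → ℝ} (hx : ∀ i, (P i *ᵥ x) ⬝ᵥ x = 0)
    (a b c : ι) :
    (P a *ᵥ (P b *ᵥ x)) ⬝ᵥ (P c *ᵥ x) = -((P b *ᵥ (P a *ᵥ x)) ⬝ᵥ (P c *ᵥ x)) := by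
  rw [eq_neg_iff_add_eq_zero, ← add_dotProduct, hP.mulVec_mulVec_add_mulVec_mulVec]
  split_ifs <;> simp [dotProduct_comm x, hx]

theorem mulVec_mulVec_dotProduct_mulVec_eq_zero {x : n → ℝ} (hx : ∀ i, (P i *ᵥ x) ⬝ᵥ x = 0)
    (a b c : ι) : (P a *ᵥ (P b *ᵥ x)) ⬝ᵥ (P c *ᵥ x) = 0 := by
  linarith [hP.mulVec_mulVec_dotProduct_anticomm hx a b c,
    hP.mulVec_mulVec_dotProduct_comm b a c x, hP.mulVec_mulVec_dotProduct_anticomm hx b c a,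
    hP.mulVec_mulVec_dotProduct_comm c b a x, hP.mulVec_mulVec_dotProduct_anticomm hx c a b,
    hP.mulVec_mulVec_dotProduct_comm a c b x]

theorem mulVec_mulVec_mulVec_dotProduct_eq_zero {x : n → ℝ}
    (hx : ∀ i, (P i *ᵥ x) ⬝ᵥ x = 0) (a i j : ι) :
    (P a *ᵥ (P i *ᵥ (P a *ᵥ x))) ⬝ᵥ (P j *ᵥ (P a *ᵥ x)) = 0 := by
  have h := hP.mulVec_mulVec_add_mulVec_mulVec a i (P a *ᵥ x)
  rw [hP.mulVec_mulVec_self] at h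
  rw [eq_sub_of_add_eq h, sub_dotProduct, dotProduct_comm (P i *ᵥ x),
    hP.mulVec_mulVec_dotProduct_mulVec_eq_zero hx]
  split_ifs
  · rw [smul_dotProduct, dotProduct_comm, hP.mulVec_mulVec_dotProduct_mulVec_eq_zero hx]
    simp
  · simp

theorem dotProduct_mulVec_mulVec_eq_zero_of_mulVec_eq_smul {x v : n → ℝ} {a : ι} {c : ℝ}
    (hv : P a *ᵥ v = c • v) (hvx : v ⬝ᵥ x = 0) (hvP : ∀ i, v ⬝ᵥ (P i *ᵥ x) = 0) (i : ι) :
    v ⬝ᵥ (P i *ᵥ (P a *ᵥ x)) = 0 := by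
  rw [eq_sub_of_add_eq (hP.mulVec_mulVec_add_mulVec_mulVec i a x), dotProduct_sub,
    ← hP.mulVec_dotProduct, hv, smul_dotProduct, hvP]
  split_ifs <;> simp [hvx]

theorem mapsTo_mulVec_isotropic (a b : ι) :
    MapsTo (P a *ᵥ ·) {v | (P b *ᵥ v) ⬝ᵥ v = 0} {v | (P b *ᵥ v) ⬝ᵥ v = 0} := by
  intro v (hv : (P b *ᵥ v) ⬝ᵥ v = 0)
  change (P b *ᵥ (P a *ᵥ v)) ⬝ᵥ (P a *ᵥ v) = 0
  rw [eq_sub_of_add_eq (hP.mulVec_mulVec_add_mulVec_mulVec b a v), sub_dotProduct,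
    hP.mulVec_dotProduct_mulVec]
  split_ifs with hab
  · subst hab
    rw [smul_dotProduct, dotProduct_comm, hv]
    simp
  · simp [hv]

end IsSymmCliffordSystem

theorem stmt_8_general (m l : ℕ)
    (P : Fin (m + 1) → Matrix (Fin (2 * l)) (Fin (2 * l)) ℝ)
    (hsymm : ∀ i, (P i).IsSymm)
    (hcl : ∀ i j, P i * P j + P j * P i =
      if i = j then (2 : ℝ) • (1 : Matrix (Fin (2 * l)) (Fin (2 * l)) ℝ) else 0)
    (x : Fin (2 * l) → ℝ) (hx : x ⬝ᵥ x = 1) (hMx : ∀ i, (P i *ᵥ x) ⬝ᵥ x = 0)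
    (α β : Fin (m + 1))
    (U V W : Fin (2 * l) → ℝ)
    -- U ∈ T₀(ξ): U = Q P₀ x with Q in the span of {P₀,...,P_m} and ⟨Q, P₀⟩ = 0
    (hU : ∃ Q ∈ Submodule.span ℝ (Set.range P),
      (Q * P 0).trace = 0 ∧ U = Q *ᵥ (P 0 *ᵥ x))
    -- V ∈ T₁(ξ) = E₋ ∩ T_x M₊
    (hV₁ : P 0 *ᵥ V = -V) (hV₂ : V ⬝ᵥ x = 0) (hV₃ : ∀ i, V ⬝ᵥ (P i *ᵥ x) = 0)
    -- W ∈ T₋₁(ξ) = E₊ ∩ T_x M₊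
    (hW₁ : P 0 *ᵥ W = W) (hW₂ : W ⬝ᵥ x = 0) (hW₃ : ∀ i, W ⬝ᵥ (P i *ᵥ x) = 0)
    (hdec : (P α * P β) *ᵥ x = U + V + W) :
    2 = U ⬝ᵥ U + (P 0 *ᵥ U) ⬝ᵥ (P 0 *ᵥ U) + 4 * (W ⬝ᵥ W) ∧
    2 = U ⬝ᵥ U + (P 0 *ᵥ U) ⬝ᵥ (P 0 *ᵥ U) + 4 * (V ⬝ᵥ V) ∧
    V ⬝ᵥ V = W ⬝ᵥ W := by
  have hP : IsSymmCliffordSystem P := ⟨hsymm, hcl⟩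
  obtain ⟨Q, hQ, -, rfl⟩ := hU
  have hU := mulVec_mem_span_range hQ (P 0 *ᵥ x)
  rw [← mulVec_mulVec] at hdec
  refine Matrix.IsSymm.two_eq_of_isotropic_decomposition (hsymm 0) (hP.mul_self 0) hV₁ hW₁
    ?_ ?_ ?_ ?_ ?_
  · have hV : P 0 *ᵥ V = (-1 : ℝ) • V := by rw [hV₁, neg_one_smul]
    rw [dotProduct_comm]
    exact dotProduct_eq_zero_of_mem_span
      (hP.dotProduct_mulVec_mulVec_eq_zero_of_mulVec_eq_smul hV hV₂ hV₃) hU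
  · have hW : P 0 *ᵥ W = (1 : ℝ) • W := by rw [hW₁, one_smul]
    rw [dotProduct_comm]
    exact dotProduct_eq_zero_of_mem_span
      (hP.dotProduct_mulVec_mulVec_eq_zero_of_mulVec_eq_smul hW hW₂ hW₃) hU
  · exact Matrix.IsSymm.mulVec_dotProduct_eq_zero_of_mem_span (hsymm 0)
      (hP.mulVec_mulVec_mulVec_dotProduct_eq_zero hMx 0) hU hU
  · rw [← hdec, hP.mulVec_dotProduct_mulVec, hP.mulVec_dotProduct_mulVec, hx]
  · rw [← hdec]
    exact hP.mapsTo_mulVec_isotropic α 0 (hP.mapsTo_mulVec_isotropic β 0 (hMx 0))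

/-- Let `{P₀,...,P_m}` be a symmetric Clifford system on `ℝ^{2l}`, `m > 2`,
`x ∈ M₊`, and `α, β ∈ {1,...,m}` with `α ≠ β`.  Decompose `P_α P_β x = U + V + W` with
`U ∈ T₀(P₀x)`, `V ∈ T₁(P₀x) = E₋ ∩ T_xM₊`, `W ∈ T₋₁(P₀x) = E₊ ∩ T_xM₊`.  Then
`2 = |U|² + |P₀U|² + 4|W|²` and `2 = |U|² + |P₀U|² + 4|V|²`; in particular `|V| = |W|`. -/
theorem stmt_8 (m l : ℕ) (hm : 2 < m)
    (P : Fin (m + 1) → Matrix (Fin (2 * l)) (Fin (2 * l)) ℝ)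
    (hsymm : ∀ i, (P i).IsSymm)
    (hcl : ∀ i j, P i * P j + P j * P i =
      if i = j then (2 : ℝ) • (1 : Matrix (Fin (2 * l)) (Fin (2 * l)) ℝ) else 0)
    (x : Fin (2 * l) → ℝ) (hx : x ⬝ᵥ x = 1) (hMx : ∀ i, (P i *ᵥ x) ⬝ᵥ x = 0)
    (α β : Fin (m + 1)) (hα : α ≠ 0) (hβ : β ≠ 0) (hαβ : α ≠ β)
    (U V W : Fin (2 * l) → ℝ)
    -- U ∈ T₀(ξ): U = Q P₀ x with Q in the span of {P₀,...,P_m} and ⟨Q, P₀⟩ = 0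
    (hU : ∃ Q ∈ Submodule.span ℝ (Set.range P),
      (Q * P 0).trace = 0 ∧ U = Q *ᵥ (P 0 *ᵥ x))
    -- V ∈ T₁(ξ) = E₋ ∩ T_x M₊
    (hV₁ : P 0 *ᵥ V = -V) (hV₂ : V ⬝ᵥ x = 0) (hV₃ : ∀ i, V ⬝ᵥ (P i *ᵥ x) = 0)
    -- W ∈ T₋₁(ξ) = E₊ ∩ T_x M₊
    (hW₁ : P 0 *ᵥ W = W) (hW₂ : W ⬝ᵥ x = 0) (hW₃ : ∀ i, W ⬝ᵥ (P i *ᵥ x) = 0)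
    (hdec : (P α * P β) *ᵥ x = U + V + W) :
    2 = U ⬝ᵥ U + (P 0 *ᵥ U) ⬝ᵥ (P 0 *ᵥ U) + 4 * (W ⬝ᵥ W) ∧
    2 = U ⬝ᵥ U + (P 0 *ᵥ U) ⬝ᵥ (P 0 *ᵥ U) + 4 * (V ⬝ᵥ V) ∧
    V ⬝ᵥ V = W ⬝ᵥ W :=
  stmt_8_general m l P hsymm hcl x hx hMx α β U V W hU hV₁ hV₂ hV₃ hW₁ hW₂ hW₃ hdec
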